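/- Let κ > 0 and let μ be a finite complex measure on ℝ³ with compact support. Then the single layer potential u(x) = ∫ G(x,y) dμ(y) satisfies the Sommerfeld radiation condition: with r = ‖x‖₂, r·( ⟨x/‖x‖₂, ∇u(x)⟩ − iκ u(x) ) → 0 as ‖x‖₂ → ∞. -/

import Mathlib

open MeasureTheory

/-- The fundamental solution `G(x,y) = e^{iκ‖x−y‖}/(4π‖x−y‖)` of the Helmholtz equation. -/
noncomputable def helmholtzG (κ : ℝ) (x y : EuclideanSpace ℝ (Fin 3)) : ℂ :=
  Complex.exp (Complex.I * (κ : ℂ) * (‖x - y‖ : ℂ)) / (4 * (Real.pi : ℂ) * (‖x - y‖ : ℂ))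

/-!
The kernel is radial, `G(x, y) = φ(‖x - y‖)` with `φ(r) = e^{iκr} / (4πr)` and
`φ' = (iκ - 1/r) φ`. For the radial direction `e = x / ‖x‖` and `t = ⟪x - y, e⟫`, `r = ‖x - y‖`,
this gives `∂ₑG - iκG = φ(r) (iκ (t - r) / r - t / r²)`. If `‖y‖ ≤ R` and `‖x‖ ≥ 2R + 2`, then
`0 ≤ t ≤ r` and `(r - t) r ≤ R²`, so `‖x‖ |∂ₑG - iκG| ≤ (|κ| R² + 1) / (π ‖x‖)` uniformly in `y`.
Away from the support the kernel and its gradient are bounded, so one may differentiate under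
the integral, and the same `O(1/‖x‖)` bound holds for the potential.
-/

open Filter Topology
open scoped Real InnerProductSpace

-- `helmholtzG κ x y` unfolds to `helmholtzProfile κ ‖x - y‖`.
noncomputable def helmholtzProfile (κ r : ℝ) : ℂ :=
  Complex.exp (Complex.I * κ * r) / (4 * π * r)

theorem norm_helmholtzProfile (κ : ℝ) {r : ℝ} (hr : 0 ≤ r) :
    ‖helmholtzProfile κ r‖ = (4 * π * r)⁻¹ := by
  have hexp : ‖Complex.exp (Complex.I * κ * r)‖ = 1 := by
    rw [Complex.norm_exp]; simp
  rw [helmholtzProfile, norm_div, hexp, one_div]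
  norm_cast
  rw [Real.norm_of_nonneg (by positivity)]

theorem norm_helmholtzProfile_le (κ : ℝ) {r : ℝ} (hr : 1 ≤ r) :
    ‖helmholtzProfile κ r‖ ≤ (4 * π)⁻¹ := by
  rw [norm_helmholtzProfile κ (zero_le_one.trans hr)]
  apply inv_anti₀ (by positivity)
  nlinarith [Real.pi_pos]

theorem measurable_helmholtzProfile (κ : ℝ) : Measurable (helmholtzProfile κ) := by
  unfold helmholtzProfile; fun_prop

theorem hasDerivAt_helmholtzProfile (κ : ℝ) {r : ℝ} (hr : r ≠ 0) :
    HasDerivAt (helmholtzProfile κ) ((Complex.I * κ - r⁻¹) * helmholtzProfile κ r) r := by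
  have hofReal : HasDerivAt (fun s : ℝ => (s : ℂ)) 1 r := (hasDerivAt_id r).ofReal_comp
  have hnum := (hofReal.const_mul (Complex.I * κ)).cexp
  have hden := hofReal.const_mul (4 * (π : ℂ))
  have hr' : (r : ℂ) ≠ 0 := by exact_mod_cast hr
  have hden0 : 4 * (π : ℂ) * r ≠ 0 := by simp [hr, Real.pi_ne_zero]
  refine (hnum.div hden hden0).congr_deriv ?_
  simp only [helmholtzProfile]
  push_cast
  field_simp

section Kernel

variable {E : Type*} [NormedAddCommGroup E] [InnerProductSpace ℝ E]

theorem hasFDerivAt_norm_of_ne_zero {v : E} (hv : v ≠ 0) :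
    HasFDerivAt (‖·‖) (‖v‖⁻¹ • innerSL ℝ v) v := by
  have hsqrt := (Real.hasDerivAt_sqrt (by positivity : ‖v‖ ^ 2 ≠ 0)).comp_hasFDerivAt v
    (hasStrictFDerivAt_norm_sq v).hasFDerivAt
  simp only [Function.comp_def, Real.sqrt_sq (norm_nonneg _)] at hsqrt
  refine hsqrt.congr_fderiv ?_
  ext w
  simp
  field_simp

noncomputable def helmholtzGrad (κ : ℝ) (v : E) : E →L[ℝ] ℂ :=
  ((Complex.I * κ - (‖v‖ : ℂ)⁻¹) * helmholtzProfile κ ‖v‖ / ‖v‖) •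
    (Complex.ofRealCLM ∘L innerSL ℝ v)

theorem helmholtzGrad_apply (κ : ℝ) (v w : E) :
    helmholtzGrad κ v w =
      (Complex.I * κ - (‖v‖ : ℂ)⁻¹) * helmholtzProfile κ ‖v‖ / ‖v‖ * (⟪v, w⟫_ℝ : ℂ) := rfl

theorem hasFDerivAt_helmholtzProfile_norm (κ : ℝ) {v : E} (hv : v ≠ 0) :
    HasFDerivAt (fun v : E => helmholtzProfile κ ‖v‖) (helmholtzGrad κ v) v := by
  have hchain := (hasDerivAt_helmholtzProfile κ (norm_ne_zero_iff.mpr hv)).hasFDerivAt.comp v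
    (hasFDerivAt_norm_of_ne_zero hv)
  refine hchain.congr_fderiv ?_
  ext w
  simp only [ContinuousLinearMap.comp_apply, ContinuousLinearMap.toSpanSingleton_apply,
    smul_apply, innerSL_apply_apply, helmholtzGrad_apply, smul_eq_mul,
    Complex.real_smul]
  push_cast
  ring

theorem norm_helmholtzGrad_le (κ : ℝ) {v : E} (hv : 1 ≤ ‖v‖) :
    ‖helmholtzGrad κ v‖ ≤ (|κ| + 1) / (4 * π) := by
  have hv0 : 0 < ‖v‖ := zero_lt_one.trans_le hv
  have hfactor : ‖Complex.I * κ - (‖v‖ : ℂ)⁻¹‖ ≤ |κ| + 1 := by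
    refine (norm_sub_le _ _).trans (add_le_add (by simp) ?_)
    rw [norm_inv, Complex.norm_real, Real.norm_of_nonneg hv0.le]
    exact inv_le_one_of_one_le₀ hv
  have hinner : ‖Complex.ofRealCLM ∘L innerSL ℝ v‖ ≤ ‖v‖ := by
    refine ContinuousLinearMap.opNorm_le_bound _ (norm_nonneg v) fun w => ?_
    simpa using abs_real_inner_le_norm v w
  calc ‖helmholtzGrad κ v‖
      ≤ (|κ| + 1) * (4 * π)⁻¹ / ‖v‖ * ‖v‖ := by
        rw [helmholtzGrad, norm_smul, norm_div, norm_mul, Complex.norm_real,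
          Real.norm_of_nonneg hv0.le]
        gcongr
        exact norm_helmholtzProfile_le κ hv
    _ = (|κ| + 1) / (4 * π) := by field_simp

theorem norm_smul_helmholtzGrad_le (κ : ℝ) (c : ℂ) {v : E} (hv : 1 ≤ ‖v‖) :
    ‖c • helmholtzGrad κ v‖ ≤ (|κ| + 1) / (4 * π) * ‖c‖ := by
  rw [norm_smul, mul_comm]
  gcongr
  exact norm_helmholtzGrad_le κ hv

theorem inner_sub_normalize_eq {x : E} (hx : x ≠ 0) (y : E) :
    ⟪x - y, ‖x‖⁻¹ • x⟫_ℝ * ‖x‖ = ‖x‖ ^ 2 - ⟪x, y⟫_ℝ := by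
  have hx0 : ‖x‖ ≠ 0 := norm_ne_zero_iff.mpr hx
  rw [real_inner_smul_right, inner_sub_left, real_inner_self_eq_norm_sq, real_inner_comm]
  field_simp

theorem inner_normalize_le (v x : E) : ⟪v, ‖x‖⁻¹ • x⟫_ℝ ≤ ‖v‖ := by
  rcases eq_or_ne x 0 with rfl | hx
  · simp
  have hunit : ‖‖x‖⁻¹ • x‖ = 1 := by
    rw [norm_smul, norm_inv, norm_norm, inv_mul_cancel₀ (norm_ne_zero_iff.mpr hx)]
  simpa [hunit] using real_inner_le_norm v (‖x‖⁻¹ • x)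

theorem inner_sub_normalize_nonneg {x y : E} (h : ‖y‖ ≤ ‖x‖) :
    0 ≤ ⟪x - y, ‖x‖⁻¹ • x⟫_ℝ := by
  rcases eq_or_ne x 0 with rfl | hx
  · simp
  have hx0 : 0 < ‖x‖ := norm_pos_iff.mpr hx
  have hxy : ⟪x, y⟫_ℝ ≤ ‖x‖ ^ 2 := by
    nlinarith [real_inner_le_norm x y, norm_nonneg y]
  nlinarith [inner_sub_normalize_eq hx y]

-- With `t` the radial component of `x - y` and `r = ‖x - y‖`: `t ≤ r` gives `(r - t) r ≤ r² - t²`,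
-- and `r² - t²` is the squared length of the component of `y` orthogonal to `x`.
theorem norm_sub_sub_inner_normalize_mul_le {x y : E} (h : ‖y‖ ≤ ‖x‖) :
    (‖x - y‖ - ⟪x - y, ‖x‖⁻¹ • x⟫_ℝ) * ‖x - y‖ ≤ ‖y‖ ^ 2 := by
  rcases eq_or_ne x 0 with rfl | hx
  · simp [sq]
  set t := ⟪x - y, ‖x‖⁻¹ • x⟫_ℝ
  have hx0 : 0 < ‖x‖ := norm_pos_iff.mpr hx
  have ht0 : 0 ≤ t := inner_sub_normalize_nonneg h
  have htr : t ≤ ‖x - y‖ := inner_normalize_le (x - y) x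
  have hsq : ‖x - y‖ ^ 2 - t ^ 2 ≤ ‖y‖ ^ 2 := by
    have ht := inner_sub_normalize_eq hx y
    have hr := norm_sub_sq_real x y
    have hcs : ⟪x, y⟫_ℝ ^ 2 ≤ (‖x‖ * ‖y‖) ^ 2 :=
      sq_le_sq' (abs_le.mp (abs_real_inner_le_norm x y)).1 (real_inner_le_norm x y)
    have hx2 : 0 < ‖x‖ ^ 2 := by positivity
    refine le_of_mul_le_mul_right ?_ hx2
    nlinarith
  nlinarith

theorem helmholtzGrad_apply_sub_eq (κ : ℝ) {v : E} (hv : v ≠ 0) (e : E) :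
    helmholtzGrad κ v e - Complex.I * κ * helmholtzProfile κ ‖v‖ =
      helmholtzProfile κ ‖v‖ *
        (Complex.I * κ * ((⟪v, e⟫_ℝ - ‖v‖) / ‖v‖ : ℝ) - (⟪v, e⟫_ℝ / ‖v‖ ^ 2 : ℝ)) := by
  have hv0 : (‖v‖ : ℂ) ≠ 0 := by exact_mod_cast norm_ne_zero_iff.mpr hv
  rw [helmholtzGrad_apply]
  push_cast
  field_simp
  ring

theorem sommerfeld_defect_le {κ n r t b : ℝ} (hr : 1 ≤ r) (hn : 0 < n) (hnr : n ≤ 2 * r)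
    (htr : t ≤ r) (hrt : (r - t) * r ≤ b) :
    n * ((4 * π * r)⁻¹ * (|κ| * ((r - t) / r) + t / r ^ 2)) ≤ (|κ| * b + 1) / (π * n) := by
  have hr0 : 0 < r := zero_lt_one.trans_le hr
  have hb : 0 ≤ b := le_trans (mul_nonneg (sub_nonneg.mpr htr) hr0.le) hrt
  have hbracket : |κ| * ((r - t) / r) + t / r ^ 2 ≤ (|κ| * b + 1) / r := by
    have hsum : |κ| * ((r - t) / r) + t / r ^ 2 = (|κ| * ((r - t) * r) + t) / r ^ 2 := by
      field_simp
    rw [hsum, div_le_div_iff₀ (by positivity) hr0]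
    have hκb : |κ| * ((r - t) * r) ≤ |κ| * b * r := by
      nlinarith [mul_le_mul_of_nonneg_left hrt (abs_nonneg κ), mul_nonneg (abs_nonneg κ) hb]
    nlinarith
  calc n * ((4 * π * r)⁻¹ * (|κ| * ((r - t) / r) + t / r ^ 2))
      ≤ n * ((4 * π * r)⁻¹ * ((|κ| * b + 1) / r)) := by gcongr
    _ = (|κ| * b + 1) * n / (4 * π * r ^ 2) := by field_simp
    _ ≤ (|κ| * b + 1) / (π * n) := by
        rw [div_le_div_iff₀ (by positivity) (by positivity)]
        have hn2 : n * n ≤ 4 * r ^ 2 := by nlinarith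
        have hB : 0 ≤ (|κ| * b + 1) * π := by positivity
        nlinarith [mul_le_mul_of_nonneg_left hn2 hB]

theorem norm_mul_helmholtzGrad_sub_le (κ : ℝ) {x y : E} (hyx : 2 * ‖y‖ ≤ ‖x‖)
    (hr : 1 ≤ ‖x - y‖) :
    ‖x‖ * ‖helmholtzGrad κ (x - y) (‖x‖⁻¹ • x) - Complex.I * κ * helmholtzProfile κ ‖x - y‖‖ ≤
      (|κ| * ‖y‖ ^ 2 + 1) / (π * ‖x‖) := by
  have hxy : x - y ≠ 0 := norm_pos_iff.mp (zero_lt_one.trans_le hr)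
  have hyx' : ‖y‖ ≤ ‖x‖ := by linarith [norm_nonneg y]
  have htri := norm_sub_norm_le x y
  have hx0 : 0 < ‖x‖ := by linarith [norm_sub_le x y]
  rw [helmholtzGrad_apply_sub_eq κ hxy, norm_mul, norm_helmholtzProfile κ (norm_nonneg _)]
  set r := ‖x - y‖
  set t := ⟪x - y, ‖x‖⁻¹ • x⟫_ℝ
  have ht0 : 0 ≤ t := inner_sub_normalize_nonneg hyx'
  have htr : t ≤ r := inner_normalize_le (x - y) x
  have hdefect : ‖Complex.I * κ * ((t - r) / r : ℝ) - (t / r ^ 2 : ℝ)‖ ≤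
      |κ| * ((r - t) / r) + t / r ^ 2 := by
    refine (norm_sub_le _ _).trans_eq ?_
    simp only [norm_mul, Complex.norm_I, Complex.norm_real, Real.norm_eq_abs, abs_div,
      abs_of_nonpos (sub_nonpos.mpr htr), abs_of_pos (zero_lt_one.trans_le hr),
      abs_of_nonneg ht0, abs_pow]
    ring
  calc ‖x‖ * ((4 * π * r)⁻¹ * ‖Complex.I * κ * ((t - r) / r : ℝ) - (t / r ^ 2 : ℝ)‖)
      ≤ ‖x‖ * ((4 * π * r)⁻¹ * (|κ| * ((r - t) / r) + t / r ^ 2)) := by gcongr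
    _ ≤ (|κ| * ‖y‖ ^ 2 + 1) / (π * ‖x‖) :=
        sommerfeld_defect_le hr hx0 (by linarith) htr (norm_sub_sub_inner_normalize_mul_le hyx')

end Kernel

section Potential

variable {E : Type*} [NormedAddCommGroup E] [MeasurableSpace E] {μ : Measure E} {ρ : E → ℂ}

noncomputable def singleLayerPotential (κ : ℝ) (μ : Measure E) (ρ : E → ℂ) (x : E) : ℂ :=
  ∫ y, helmholtzProfile κ ‖x - y‖ * ρ y ∂μ

variable [BorelSpace E]

theorem aestronglyMeasurable_helmholtzProfile_mul (κ : ℝ) (x : E)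
    (hρ : AEStronglyMeasurable ρ μ) :
    AEStronglyMeasurable (fun y => helmholtzProfile κ ‖x - y‖ * ρ y) μ :=
  ((measurable_helmholtzProfile κ).comp (by fun_prop)).aestronglyMeasurable.mul hρ

theorem integrable_helmholtzProfile_mul (κ : ℝ) {x : E} (hρ : Integrable ρ μ)
    (hfar : ∀ᵐ y ∂μ, 1 ≤ ‖x - y‖) :
    Integrable (fun y => helmholtzProfile κ ‖x - y‖ * ρ y) μ := by
  refine Integrable.mono' (hρ.norm.const_mul (4 * π)⁻¹)
    (aestronglyMeasurable_helmholtzProfile_mul κ x hρ.1) ?_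
  filter_upwards [hfar] with y hy
  rw [norm_mul]
  gcongr
  exact norm_helmholtzProfile_le κ hy

variable [InnerProductSpace ℝ E]

theorem stronglyMeasurable_helmholtzGrad [SecondCountableTopology E] (κ : ℝ) :
    StronglyMeasurable (helmholtzGrad κ : E → E →L[ℝ] ℂ) := by
  have hscalar : Measurable fun v : E =>
      (Complex.I * κ - (‖v‖ : ℂ)⁻¹) * helmholtzProfile κ ‖v‖ / ‖v‖ := by
    have hφ := measurable_helmholtzProfile κ
    fun_prop
  have hinner : Continuous fun v : E => Complex.ofRealCLM ∘L innerSL ℝ v :=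
    continuous_const.clm_comp (innerSL ℝ).continuous
  exact hscalar.stronglyMeasurable.smul hinner.stronglyMeasurable

theorem aestronglyMeasurable_smul_helmholtzGrad [SecondCountableTopology E] (κ : ℝ) (x : E)
    (hρ : AEStronglyMeasurable ρ μ) :
    AEStronglyMeasurable (fun y => ρ y • helmholtzGrad κ (x - y)) μ :=
  hρ.smul ((stronglyMeasurable_helmholtzGrad κ).comp_measurable
    (measurable_const.sub measurable_id)).aestronglyMeasurable

theorem integrable_smul_helmholtzGrad [SecondCountableTopology E] (κ : ℝ) {x : E}
    (hρ : Integrable ρ μ) (hfar : ∀ᵐ y ∂μ, 1 ≤ ‖x - y‖) :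
    Integrable (fun y => ρ y • helmholtzGrad κ (x - y)) μ :=
  Integrable.mono' (hρ.norm.const_mul _) (aestronglyMeasurable_smul_helmholtzGrad κ x hρ.1)
    (hfar.mono fun _ hy => norm_smul_helmholtzGrad_le κ _ hy)

theorem hasFDerivAt_singleLayerPotential [SecondCountableTopology E] (κ : ℝ) {x : E}
    (hρ : Integrable ρ μ) (hfar : ∀ᵐ y ∂μ, 2 ≤ ‖x - y‖) :
    HasFDerivAt (singleLayerPotential κ μ ρ) (∫ y, ρ y • helmholtzGrad κ (x - y) ∂μ) x := by
  have hnear : ∀ᵐ y ∂μ, ∀ x' ∈ Metric.ball x 1, 1 ≤ ‖x' - y‖ := by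
    filter_upwards [hfar] with y hy x' hx'
    have hxx' : ‖x - x'‖ < 1 := by rwa [← dist_eq_norm, dist_comm]
    linarith [norm_sub_le_norm_sub_add_norm_sub x x' y]
  refine hasFDerivAt_integral_of_dominated_of_fderiv_le (Metric.ball_mem_nhds x one_pos)
    (.of_forall fun x' => aestronglyMeasurable_helmholtzProfile_mul κ x' hρ.1)
    (integrable_helmholtzProfile_mul κ hρ (hfar.mono fun _ hy => one_le_two.trans hy))
    (aestronglyMeasurable_smul_helmholtzGrad κ x hρ.1)
    (hnear.mono fun y hy x' hx' => norm_smul_helmholtzGrad_le κ (ρ y) (hy x' hx'))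
    (hρ.norm.const_mul _) ?_
  filter_upwards [hnear] with y hy x' hx'
  have hne : x' - y ≠ 0 := norm_pos_iff.mp (zero_lt_one.trans_le (hy x' hx'))
  exact ((hasFDerivAt_comp_sub y).mpr (hasFDerivAt_helmholtzProfile_norm κ hne)).mul_const (ρ y)

end Potential

section Radiation

variable {E : Type*} [NormedAddCommGroup E] [InnerProductSpace ℝ E] [MeasurableSpace E]
  [BorelSpace E] [SecondCountableTopology E] {μ : Measure E} {ρ : E → ℂ}

theorem norm_sommerfeld_singleLayerPotential_le (κ : ℝ) {R : ℝ} (hρ : Integrable ρ μ)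
    (hR : ∀ᵐ y ∂μ, ‖y‖ ≤ R) {x : E} (hx : 2 * R + 2 ≤ ‖x‖) :
    ‖(‖x‖ : ℂ) * (fderiv ℝ (singleLayerPotential κ μ ρ) x (‖x‖⁻¹ • x) -
        Complex.I * κ * singleLayerPotential κ μ ρ x)‖ ≤
      (|κ| * R ^ 2 + 1) / π * (∫ y, ‖ρ y‖ ∂μ) / ‖x‖ := by
  set e := ‖x‖⁻¹ • x
  have hfar : ∀ᵐ y ∂μ, 2 ≤ ‖x - y‖ := hR.mono fun y hy => by
    linarith [norm_sub_norm_le x y, norm_nonneg y]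
  have hfar₁ : ∀ᵐ y ∂μ, 1 ≤ ‖x - y‖ := hfar.mono fun _ hy => one_le_two.trans hy
  have hgrad := integrable_smul_helmholtzGrad κ hρ hfar₁
  have hrepr : (‖x‖ : ℂ) * (fderiv ℝ (singleLayerPotential κ μ ρ) x e -
        Complex.I * κ * singleLayerPotential κ μ ρ x) =
      ∫ y, (‖x‖ : ℂ) * ((ρ y • helmholtzGrad κ (x - y)) e -
        Complex.I * κ * (helmholtzProfile κ ‖x - y‖ * ρ y)) ∂μ := by
    rw [(hasFDerivAt_singleLayerPotential κ hρ hfar).fderiv,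
      ContinuousLinearMap.integral_apply hgrad, singleLayerPotential, ← integral_const_mul,
      ← integral_sub (hgrad.apply_continuousLinearMap e)
        ((integrable_helmholtzProfile_mul κ hρ hfar₁).const_mul _), ← integral_const_mul]
  have hpointwise : ∀ᵐ y ∂μ, ‖(‖x‖ : ℂ) * ((ρ y • helmholtzGrad κ (x - y)) e -
        Complex.I * κ * (helmholtzProfile κ ‖x - y‖ * ρ y))‖ ≤
      (|κ| * R ^ 2 + 1) / (π * ‖x‖) * ‖ρ y‖ := by
    filter_upwards [hR] with y hy
    have hyx : 2 * ‖y‖ ≤ ‖x‖ := by linarith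
    have hxy : 1 ≤ ‖x - y‖ := by linarith [norm_sub_norm_le x y, norm_nonneg y]
    have hfactor : (ρ y • helmholtzGrad κ (x - y)) e -
          Complex.I * κ * (helmholtzProfile κ ‖x - y‖ * ρ y) =
        ρ y * (helmholtzGrad κ (x - y) e - Complex.I * κ * helmholtzProfile κ ‖x - y‖) := by
      rw [smul_apply, smul_eq_mul]
      ring
    calc ‖(‖x‖ : ℂ) * ((ρ y • helmholtzGrad κ (x - y)) e -
          Complex.I * κ * (helmholtzProfile κ ‖x - y‖ * ρ y))‖
        = ‖ρ y‖ * (‖x‖ * ‖helmholtzGrad κ (x - y) e -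
            Complex.I * κ * helmholtzProfile κ ‖x - y‖‖) := by
          rw [hfactor, norm_mul, norm_mul, Complex.norm_real, norm_norm]
          ring
      _ ≤ ‖ρ y‖ * ((|κ| * ‖y‖ ^ 2 + 1) / (π * ‖x‖)) := by
          gcongr
          exact norm_mul_helmholtzGrad_sub_le κ hyx hxy
      _ ≤ (|κ| * R ^ 2 + 1) / (π * ‖x‖) * ‖ρ y‖ := by
          rw [mul_comm]
          gcongr
  rw [hrepr]
  refine (norm_integral_le_of_norm_le (hρ.norm.const_mul _) hpointwise).trans_eq ?_
  rw [integral_const_mul]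
  ring

end Radiation

theorem tendsto_comap_norm_of_norm_le_div {α F : Type*} [Norm α] [SeminormedAddCommGroup F]
    {f : α → F} (C R : ℝ) (h : ∀ x, R ≤ ‖x‖ → ‖f x‖ ≤ C / ‖x‖) :
    Tendsto f (comap (fun x => ‖x‖) atTop) (𝓝 0) := by
  have hnorm : Tendsto (fun x : α => ‖x‖) (comap (fun x => ‖x‖) atTop) atTop := tendsto_comap
  exact squeeze_zero_norm' ((hnorm.eventually_ge_atTop R).mono h)
    (tendsto_const_nhds.div_atTop hnorm)

theorem singleLayerPotential_sommerfeld (κ : ℝ)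
    (μ : Measure (EuclideanSpace ℝ (Fin 3)))
    (ρ : EuclideanSpace ℝ (Fin 3) → ℂ) (hρ : Integrable ρ μ)
    (K : Set (EuclideanSpace ℝ (Fin 3))) (hK : IsCompact K) (hsupp : μ Kᶜ = 0)
    (u : EuclideanSpace ℝ (Fin 3) → ℂ)
    (hu : ∀ x, u x = ∫ y, helmholtzG κ x y * ρ y ∂μ) :
    Filter.Tendsto
      (fun x : EuclideanSpace ℝ (Fin 3) =>
        (‖x‖ : ℂ) * (fderiv ℝ u x (‖x‖⁻¹ • x) - Complex.I * (κ : ℂ) * u x))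
      (Filter.comap (fun x : EuclideanSpace ℝ (Fin 3) => ‖x‖) Filter.atTop) (nhds 0) := by
  obtain ⟨R, hKR⟩ := hK.isBounded.subset_closedBall 0
  have hR : ∀ᵐ y ∂μ, ‖y‖ ≤ R := (measure_eq_zero_iff_ae_notMem.mp hsupp).mono fun y hy => by
    simpa using hKR (not_not.mp hy)
  have hu' : u = singleLayerPotential κ μ ρ := funext hu
  subst hu'
  exact tendsto_comap_norm_of_norm_le_div _ _ fun x hx =>
    norm_sommerfeld_singleLayerPotential_le κ hρ hR hx
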